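/- arXiv:2205.00644 — 6 statements merged into one kernel-verified Lean document; each statement's English description precedes it below -/
import Mathlib

section
/- Let M be a self-adjoint operator on a finite-dimensional real inner product space V, and suppose V = V¹ ⊕ ... ⊕ Vᵏ is a direct sum decomposition such that for each i and every v ∈ Vⁱ, ‖M v − λᵢ v‖ ≤ cᵢ ‖v‖. If the intervals [λᵢ − cᵢ, λᵢ + cᵢ] are pairwise disjoint (in particular cᵢ + cᵢ₊₁ < λᵢ − λᵢ₊₁ for the sorted λᵢ), then every eigenvalue of M lies in ⋃ᵢ [λᵢ − cᵢ, λᵢ + cᵢ], and moreover [λᵢ − cᵢ, λᵢ + cᵢ] contains at least dim(Vⁱ) eigenvalues of M counted with multiplicity. -/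
open Module Submodule
open scoped DirectSum

/-- Sum of finranks of an independent family of submodules is at most the ambient finrank. -/
lemma aux_sum_finrank_le {ι : Type*} [Fintype ι] [DecidableEq ι]
    {K E : Type*} [DivisionRing K] [AddCommGroup E] [Module K E] [FiniteDimensional K E]
    (p : ι → Submodule K E) (hp : iSupIndep p) :
    ∑ i, Module.finrank K (p i) ≤ Module.finrank K E := by
  have hinj := hp.dfinsupp_lsum_injective
  have h : Module.finrank K (⨁ i, ↥(p i)) ≤ Module.finrank K E :=
    LinearMap.finrank_le_finrank_of_injective
      (f := ((DFinsupp.lsum ℕ fun i => (p i).subtype) : (⨁ i, ↥(p i)) →ₗ[K] E)) hinj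
  rwa [(DirectSum.linearEquivFunOnFintype K _ (fun i => ↥(p i))).finrank_eq,
      Module.finrank_pi_fintype] at h

/-- **Eigenstripping.** If a self-adjoint operator `M` on a finite-dimensional real inner
product space admits an approximate eigendecomposition `V = V¹ ⊕ … ⊕ Vᵏ` with approximate
eigenvalues `lam i` and errors `c i`, and the intervals `[lam i - c i, lam i + c i]` are
pairwise disjoint (via the gap condition `c i + c j < lam i - lam j` for `i < j`), then every
eigenvalue of `M` lies in the union of these intervals, and the `i`-th interval contains at
least `dim Vⁱ` eigenvalues counted with multiplicity. -/
theorem eigenstripping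
    {V : Type*} [NormedAddCommGroup V] [InnerProductSpace ℝ V] [FiniteDimensional ℝ V]
    (M : Module.End ℝ V) (hM : LinearMap.IsSymmetric M)
    (k : ℕ) (Vsub : Fin k → Submodule ℝ V) (hdecomp : DirectSum.IsInternal Vsub)
    (lam c : Fin k → ℝ) (hc : ∀ i, 0 ≤ c i)
    (happrox : ∀ i, ∀ v ∈ Vsub i, ‖M v - lam i • v‖ ≤ c i * ‖v‖)
    (hgap : ∀ i j : Fin k, i < j → c i + c j < lam i - lam j) :
    (∀ μ : ℝ, Module.End.HasEigenvalue M μ →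
        ∃ i, μ ∈ Set.Icc (lam i - c i) (lam i + c i)) ∧
    (∀ i, Module.finrank ℝ (Vsub i) ≤
        Module.finrank ℝ ↥(⨆ μ ∈ Set.Icc (lam i - c i) (lam i + c i),
          Module.End.eigenspace M μ)) := by
  classical
  set n := Module.finrank ℝ V with hn'
  have hn : Module.finrank ℝ V = n := rfl
  set b := hM.eigenvectorBasis hn with hb
  set μ := hM.eigenvalues hn with hμ
  set W : Fin k → Submodule ℝ V :=
    fun i => ⨆ ν ∈ Set.Icc (lam i - c i) (lam i + c i), Module.End.eigenspace M ν with hW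
  -- basic facts
  have hrepr : ∀ (u : V) j, b.repr (M u) j = μ j * b.repr u j := fun u j =>
    hM.eigenvectorBasis_apply_self_apply hn u j
  have hnorm : ∀ w : V, ‖w‖ ^ 2 = ∑ j, (b.repr w j) ^ 2 := by
    intro w
    rw [← b.repr.norm_map w, PiLp.norm_sq_eq_of_L2]
    simp [Real.norm_eq_abs, sq_abs]
  have hMnorm : ∀ (u : V) (t : ℝ),
      ‖M u - t • u‖ ^ 2 = ∑ j, (μ j - t) ^ 2 * (b.repr u j) ^ 2 := by
    intro u t
    rw [hnorm]
    refine Finset.sum_congr rfl fun j _ => ?_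
    have h1 : b.repr (M u - t • u) j = (μ j - t) * (b.repr u j) := by
      have : b.repr (M u - t • u) = b.repr (M u) - t • b.repr u := by
        rw [map_sub, map_smul]
      rw [this]
      simp only [PiLp.sub_apply, PiLp.smul_apply, hrepr, smul_eq_mul]
      ring
    rw [h1, mul_pow]
  -- membership of basis eigenvectors in W
  have hbW : ∀ i j, μ j ∈ Set.Icc (lam i - c i) (lam i + c i) → (b j : V) ∈ W i := by
    intro i j hj
    have h1 : (b j : V) ∈ Module.End.eigenspace M (μ j) :=
      (hM.hasEigenvector_eigenvectorBasis hn j).1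
    exact (le_iSup₂ (f := fun ν (_ : ν ∈ Set.Icc (lam i - c i) (lam i + c i)) =>
      Module.End.eigenspace M ν) (μ j) hj) h1
  -- key injectivity lemma
  have hkey : ∀ i, ∀ u ∈ Vsub i, u ∈ (W i)ᗮ → u = 0 := by
    intro i u hu horth
    by_contra hne
    have hb0 : ∀ j, μ j ∈ Set.Icc (lam i - c i) (lam i + c i) → b.repr u j = 0 := by
      intro j hj
      have := (Submodule.mem_orthogonal (W i) u).mp horth (b j) (hbW i j hj)
      rw [b.repr_apply_apply]
      exact this
    obtain ⟨j₀, hj₀⟩ : ∃ j, b.repr u j ≠ 0 := by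
      by_contra h
      push_neg at h
      apply hne
      have h2 : b.repr u = 0 := by
        ext j; exact h j
      have := b.repr.map_eq_zero_iff.mp h2
      exact this
    have hsq : ∀ j, b.repr u j ≠ 0 → (c i) ^ 2 < (μ j - lam i) ^ 2 := by
      intro j hj
      have hnot : μ j ∉ Set.Icc (lam i - c i) (lam i + c i) := fun hmem => hj (hb0 j hmem)
      rw [Set.mem_Icc, not_and_or, not_le, not_le] at hnot
      have habs : c i < |μ j - lam i| := by
        rcases hnot with h | h
        · exact lt_abs.mpr (Or.inr (by linarith))
        · exact lt_abs.mpr (Or.inl (by linarith))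
      calc (c i) ^ 2 < |μ j - lam i| ^ 2 := by
            exact pow_lt_pow_left₀ habs (hc i) (by norm_num)
        _ = (μ j - lam i) ^ 2 := sq_abs _
    have hterm : ∀ j, (c i) ^ 2 * (b.repr u j) ^ 2 ≤ (μ j - lam i) ^ 2 * (b.repr u j) ^ 2 := by
      intro j
      by_cases hj : b.repr u j = 0
      · simp [hj]
      · exact mul_le_mul_of_nonneg_right (le_of_lt (hsq j hj)) (sq_nonneg _)
    have hstrict : (c i) ^ 2 * (b.repr u j₀) ^ 2 < (μ j₀ - lam i) ^ 2 * (b.repr u j₀) ^ 2 :=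
      mul_lt_mul_of_pos_right (hsq j₀ hj₀) (by positivity)
    have hlt : (c i) ^ 2 * ‖u‖ ^ 2 < (c i) ^ 2 * ‖u‖ ^ 2 := by
      calc (c i) ^ 2 * ‖u‖ ^ 2 = ∑ j, (c i) ^ 2 * (b.repr u j) ^ 2 := by
            rw [hnorm, Finset.mul_sum]
        _ < ∑ j, (μ j - lam i) ^ 2 * (b.repr u j) ^ 2 :=
            Finset.sum_lt_sum (fun j _ => hterm j) ⟨j₀, Finset.mem_univ _, hstrict⟩
        _ = ‖M u - lam i • u‖ ^ 2 := (hMnorm u (lam i)).symm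
        _ ≤ (c i * ‖u‖) ^ 2 := pow_le_pow_left₀ (norm_nonneg _) (happrox i u hu) 2
        _ = (c i) ^ 2 * ‖u‖ ^ 2 := by ring
    exact lt_irrefl _ hlt
  -- Part 2
  have hpart2 : ∀ i, Module.finrank ℝ (Vsub i) ≤ Module.finrank ℝ (W i) := by
    intro i
    set φ : Vsub i →ₗ[ℝ] W i :=
      (orthogonalProjection (W i)).toLinearMap ∘ₗ (Vsub i).subtype with hφ
    have hker : LinearMap.ker φ = ⊥ := by
      ext u
      simp only [LinearMap.mem_ker, Submodule.mem_bot]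
      constructor
      · intro h
        have h1 : orthogonalProjection (W i) (u : V) = 0 := h
        have h2 : (u : V) ∈ (W i)ᗮ := Submodule.orthogonalProjectionOnto_eq_zero_iff.mp h1
        exact Subtype.ext (hkey i u u.2 h2)
      · rintro rfl
        simp [hφ]
    exact LinearMap.finrank_le_finrank_of_injective (LinearMap.ker_eq_bot.mp hker)
  -- orthogonality of biSups of eigenspaces over disjoint sets
  have hortho : ∀ (s t : Set ℝ), Disjoint s t →
      (⨆ ν ∈ s, Module.End.eigenspace M ν) ⟂ (⨆ ν ∈ t, Module.End.eigenspace M ν) := by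
    intro s t hst
    rw [Submodule.isOrtho_iSup_left]
    intro ν
    rw [Submodule.isOrtho_iSup_left]
    intro hν
    rw [Submodule.isOrtho_iSup_right]
    intro ν'
    rw [Submodule.isOrtho_iSup_right]
    intro hν'
    have hne : ν ≠ ν' := by
      intro h
      exact (Set.disjoint_left.mp hst hν) (h ▸ hν')
    rw [Submodule.isOrtho_iff_inner_eq]
    intro x hx y hy
    exact hM.orthogonalFamily_eigenspaces hne ⟨x, hx⟩ ⟨y, hy⟩
  -- disjointness of the intervals
  have hdisj : ∀ i i' : Fin k, i ≠ i' →
      Disjoint (Set.Icc (lam i - c i) (lam i + c i))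
        (Set.Icc (lam i' - c i') (lam i' + c i')) := by
    intro i i' hne
    rw [Set.disjoint_left]
    intro ν hν hν'
    rw [Set.mem_Icc] at hν hν'
    rcases lt_or_gt_of_ne hne with h | h
    · have := hgap i i' h; linarith [hν.1, hν'.2]
    · have := hgap i' i h; linarith [hν'.1, hν.2]
  -- Part 1
  have hsum : ∑ i, Module.finrank ℝ (Vsub i) = Module.finrank ℝ V := by
    have e : (⨁ i, Vsub i) ≃ₗ[ℝ] V :=
      LinearEquiv.ofBijective (DirectSum.coeLinearMap Vsub) hdecomp
    rw [← e.finrank_eq, Module.finrank_directSum]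
  have hpart1 : ∀ μ₀ : ℝ, Module.End.HasEigenvalue M μ₀ →
      ∃ i, μ₀ ∈ Set.Icc (lam i - c i) (lam i + c i) := by
    intro μ₀ hμ₀
    by_contra hcon
    push_neg at hcon
    set s : Option (Fin k) → Set ℝ := fun o => o.elim {μ₀} (fun i => Set.Icc (lam i - c i) (lam i + c i)) with hs
    set G : Option (Fin k) → Submodule ℝ V := fun o => ⨆ ν ∈ s o, Module.End.eigenspace M ν with hG
    have hsdisj : ∀ o o' : Option (Fin k), o ≠ o' → Disjoint (s o) (s o') := by
      rintro (_ | i) (_ | i') hne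
      · exact absurd rfl hne
      · rw [Set.disjoint_left]
        intro ν hν hν'
        rw [show s none = {μ₀} from rfl, Set.mem_singleton_iff] at hν
        exact hcon i' (hν ▸ hν')
      · rw [Set.disjoint_left]
        intro ν hν hν'
        rw [show s none = {μ₀} from rfl, Set.mem_singleton_iff] at hν'
        exact hcon i (hν' ▸ hν)
      · exact hdisj i i' (fun h => hne (by rw [h]))
    have hGfam : OrthogonalFamily ℝ (fun o => G o) (fun o => (G o).subtypeₗᵢ) := by
      intro o o' hne x y
      have := (Submodule.isOrtho_iff_inner_eq.mp (hortho (s o) (s o') (hsdisj o o' hne)))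
      exact this x x.2 y y.2
    have hGindep : iSupIndep G := hGfam.independent
    have hGsum := aux_sum_finrank_le G hGindep
    rw [Fintype.sum_option] at hGsum
    have hGnone : G none = Module.End.eigenspace M μ₀ := by
      rw [show G none = ⨆ ν ∈ ({μ₀} : Set ℝ), Module.End.eigenspace M ν from rfl]
      exact iSup_singleton
    have hGsome : ∀ i, G (some i) = W i := fun i => rfl
    have hpos : 0 < Module.finrank ℝ (Module.End.eigenspace M μ₀) := by
      obtain ⟨v, hv⟩ := hμ₀.exists_hasEigenvector
      haveI : Nontrivial (Module.End.eigenspace M μ₀) :=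
        nontrivial_of_ne ⟨v, hv.1⟩ 0 (by simp [Subtype.ext_iff, hv.2])
      exact Module.finrank_pos
    have hle : Module.finrank ℝ V ≤ ∑ i, Module.finrank ℝ (W i) := by
      rw [← hsum]
      exact Finset.sum_le_sum fun i _ => hpart2 i
    rw [hGnone] at hGsum
    have h2 : ∑ i, Module.finrank ℝ ↥(G (some i)) = ∑ i, Module.finrank ℝ ↥(W i) := rfl
    rw [h2] at hGsum
    omega
  exact ⟨hpart1, hpart2⟩
end

section
/- Let M be a self-adjoint operator on a finite-dimensional real inner product space V and let W ⊆ V be a subspace of dimension m such that ‖(M − λI)f‖ ≤ c‖f‖ for all f ∈ W. Then the operator (M − λI)² has at least m eigenvalues (with multiplicity) that are at most c². -/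
open scoped RealInnerProductSpace


/-- If `W` is an `m`-dimensional subspace on which `‖(M - l·I) f‖ ≤ c ‖f‖`, then the
self-adjoint operator `(M - l·I)²` has at least `m` eigenvalues (with multiplicity)
that are at most `c²`. -/
theorem courant_fischer_eigenstripping_step
    {V : Type*} [NormedAddCommGroup V] [InnerProductSpace ℝ V] [FiniteDimensional ℝ V]
    (M : Module.End ℝ V) (hM : LinearMap.IsSymmetric M)
    (l c : ℝ) (hc : 0 ≤ c)
    (W : Submodule ℝ V) (m : ℕ) (hm : Module.finrank ℝ W = m)
    (hbound : ∀ f ∈ W, ‖M f - l • f‖ ≤ c * ‖f‖) :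
    m ≤ Module.finrank ℝ ↥(⨆ μ ∈ Set.Iic (c ^ 2),
        Module.End.eigenspace ((M - l • (1 : Module.End ℝ V)) ^ 2) μ) := by
  classical
  set A : Module.End ℝ V := M - l • (1 : Module.End ℝ V) with hA_def
  have hA : LinearMap.IsSymmetric A := by
    intro x y
    simp only [hA_def, LinearMap.sub_apply, LinearMap.smul_apply, Module.End.one_apply,
      inner_sub_left, inner_sub_right, real_inner_smul_left, real_inner_smul_right, hM x y,
      real_inner_comm x y]
  set T : Module.End ℝ V := A ^ 2 with hT_def
  have hT : LinearMap.IsSymmetric T := by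
    intro x y
    rw [hT_def]
    simp only [pow_two, Module.End.mul_apply]
    rw [hA (A x) y, hA x (A y)]
  have hTA : ∀ f : V, ⟪T f, f⟫ = ‖A f‖ ^ 2 := by
    intro f
    rw [hT_def]
    simp only [pow_two, Module.End.mul_apply]
    rw [hA (A f) f, real_inner_self_eq_norm_sq, sq]
  set n := Module.finrank ℝ V with hn
  set b := hT.eigenvectorBasis rfl with hb_def
  set μ := hT.eigenvalues (n := n) rfl with hμ_def
  have hTb : ∀ i, T (b i) = μ i • b i := fun i =>
    (hT.hasEigenvector_eigenvectorBasis rfl i).apply_eq_smul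
  set E : Submodule ℝ V := ⨆ ν ∈ Set.Iic (c ^ 2), Module.End.eigenspace T ν with hE_def
  -- the key claim : W and Eᗮ are disjoint
  have hdisj : Disjoint W Eᗮ := by
    rw [Submodule.disjoint_def]
    intro f hfW hfE
    by_contra hf0
    -- b.repr f i vanishes for small eigenvalues
    have hr : ∀ i, μ i ≤ c ^ 2 → ⟪b i, f⟫ = 0 := by
      intro i hi
      have hbE : b i ∈ E := by
        refine Submodule.mem_iSup_of_mem (μ i) ?_
        refine Submodule.mem_iSup_of_mem hi ?_
        exact (hT.hasEigenvector_eigenvectorBasis rfl i).1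
      exact (Submodule.mem_orthogonal E f).mp hfE (b i) hbE
    -- expand inner products in the eigenbasis
    have hrepr : ∀ g : V, ∀ i, b.repr g i = ⟪b i, g⟫ := fun g i =>
      b.repr_apply_apply g i
    have hreprT : ∀ i, b.repr (T f) i = μ i * b.repr f i := by
      intro i
      rw [hrepr, hrepr, ← hT (b i) f, hTb i, inner_smul_left, RCLike.conj_to_real]
    have hinner : ⟪T f, f⟫ = ∑ i, μ i * (b.repr f i) ^ 2 := by
      rw [← b.repr.inner_map_map (T f) f]
      simp only [PiLp.inner_apply, RCLike.inner_apply, starRingEnd_apply, star_trivial]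
      exact Finset.sum_congr rfl fun i _ => by rw [hreprT i]; ring
    have hnormf : ‖f‖ ^ 2 = ∑ i, (b.repr f i) ^ 2 := by
      rw [← real_inner_self_eq_norm_sq, ← b.repr.inner_map_map f f]
      simp only [PiLp.inner_apply, RCLike.inner_apply, starRingEnd_apply, star_trivial]
      exact Finset.sum_congr rfl fun i _ => (sq (b.repr f i)).symm
    -- pick an index with nonzero coefficient
    have hex : ∃ i, b.repr f i ≠ 0 := by
      by_contra h
      push_neg at h
      apply hf0
      have := b.sum_repr f
      simp only [h, zero_smul, Finset.sum_const_zero] at this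
      exact this.symm
    obtain ⟨i₀, hi₀⟩ := hex
    have hμi₀ : c ^ 2 < μ i₀ := by
      by_contra h
      push_neg at h
      exact hi₀ (by rw [hrepr]; exact hr i₀ h)
    -- strict inequality
    have hlt : c ^ 2 * ‖f‖ ^ 2 < ⟪T f, f⟫ := by
      rw [hinner, hnormf, Finset.mul_sum]
      apply Finset.sum_lt_sum
      · intro i _
        rcases le_or_gt (μ i) (c ^ 2) with h | h
        · have : b.repr f i = 0 := by rw [hrepr]; exact hr i h
          simp [this]
        · nlinarith [sq_nonneg (b.repr f i)]
      · exact ⟨i₀, Finset.mem_univ i₀, by nlinarith [sq_nonneg (b.repr f i₀),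
          (pow_ne_zero 2 hi₀ : (b.repr f i₀) ^ 2 ≠ 0).lt_of_le' (sq_nonneg _)]⟩
    -- but the bound says the opposite
    have hle : ⟪T f, f⟫ ≤ c ^ 2 * ‖f‖ ^ 2 := by
      rw [hTA f]
      have h1 : ‖A f‖ ≤ c * ‖f‖ := by
        have := hbound f hfW
        simpa [hA_def, LinearMap.sub_apply, LinearMap.smul_apply] using this
      nlinarith [norm_nonneg (A f), norm_nonneg f]
    linarith
  -- conclude via dimension counting
  have h1 : Module.finrank ℝ E + Module.finrank ℝ Eᗮ = n :=
    Submodule.finrank_add_finrank_orthogonal E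
  have h2 : Module.finrank ℝ W + Module.finrank ℝ Eᗮ ≤ n := by
    rw [← Submodule.finrank_sup_add_finrank_inf_eq W Eᗮ, hdisj.eq_bot, finrank_bot, add_zero]
    exact Submodule.finrank_le _
  omega
end

section
/- Let (X,Π) be a d-dimensional regular measured poset and τ ∈ X(i) with i ≤ k < d. Then the non-expansion of the link indicator under the upper walk satisfies exactly ⟨𝟙_{X^k_τ}, D_{k+1}U_k 𝟙_{X^k_τ}⟩ / ⟨𝟙_{X^k_τ}, 𝟙_{X^k_τ}⟩ = ⟨U_k 𝟙_{X^k_τ}, U_k 𝟙_{X^k_τ}⟩ / ⟨𝟙_{X^k_τ}, 𝟙_{X^k_τ}⟩ = R(k,i) / R(k+1,i), using ⟨U_k 𝟙_{X^k_τ}, U_k 𝟙_{X^k_τ}⟩ = (R(k,i)²/R(k+1,i)) π_i(τ). -/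
open Finset

attribute [local instance] Classical.propDecidable

/-- The up operator: `(U g)(y) = (1 / R (r y)) ∑_{x ⋖ y} g x`. -/
noncomputable def Uop {X : Type*} [Fintype X] [PartialOrder X]
    (r : X → ℕ) (R : ℕ → ℕ) (g : X → ℝ) : X → ℝ :=
  fun y => (1 / (R (r y) : ℝ)) * ∑ x ∈ univ.filter (fun x => x ⋖ y), g x

/-- The down operator: `(D f)(x) = (1 / (R (r x + 1) · π x)) ∑_{y ⋗ x} π y · f y`. -/
noncomputable def Dop {X : Type*} [Fintype X] [PartialOrder X]
    (r : X → ℕ) (R : ℕ → ℕ) (π : X → ℝ) (f : X → ℝ) : X → ℝ :=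
  fun x => (1 / ((R (r x + 1) : ℝ) * π x)) * ∑ y ∈ univ.filter (fun y => x ⋖ y), π y * f y

/-- The weighted inner product on level `k`. -/
noncomputable def ip {X : Type*} [Fintype X] [PartialOrder X]
    (r : X → ℕ) (π : X → ℝ) (k : ℕ) (f g : X → ℝ) : ℝ :=
  ∑ τ ∈ univ.filter (fun τ => r τ = k), π τ * f τ * g τ

/-- Number of saturated (cover) chains from `x` down to `y`. -/
noncomputable def chainCount {X : Type*} [PartialOrder X] (x y : X) : ℕ :=
  Nat.card {l : List X // l.Chain' (fun a b => b ⋖ a) ∧ l.head? = some x ∧ l.getLast? = some y}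

/-!
`U` and `D` are adjoint for the weighted inner products, which gives the first equality.
By regularity the number of saturated chains from `y ≥ τ` down to `τ` depends only on the rank
of `y`, say it is `n (r y)`; splitting such a chain after its top element shows that each `y` of
rank `j + 1` above `τ` covers exactly `n (j + 1) / n j` elements above `τ`. Hence `U 𝟙_{X^k_τ}`
is the constant `n (k + 1) / (n k R (k + 1))` on `X^{k+1}_τ`, and, since
`R (j + 1) π x = ∑_{y ⋗ x} π y`, also `n (j + 1) π(X^{j+1}_τ) = R (j + 1) n j π(X^j_τ)`,
which telescopes to `π(X^j_τ) = R(j, i) π τ`.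
-/

section CoverChains

variable {X : Type*} [PartialOrder X]

abbrev CoverChain (x y : X) : Type _ :=
  {l : List X // l.IsChain (fun a b => b ⋖ a) ∧ l.head? = some x ∧ l.getLast? = some y}

lemma chainCount_eq_card_coverChain (x y : X) : chainCount x y = Nat.card (CoverChain x y) := rfl

lemma le_of_isChain_covBy {l : List X} {a b : X} (hl : l.IsChain fun p q => q ⋖ p)
    (ha : l.head? = some a) (hb : l.getLast? = some b) : b ≤ a := by
  obtain ⟨t, rfl⟩ := List.head?_eq_some_iff.mp ha
  exact hl.induction (· ≤ a) _ (fun _ _ h hx => h.le.trans hx) (fun _ => le_rfl) b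
    (List.mem_of_getLast? hb)

lemma nodup_of_isChain_covBy {l : List X} (hl : l.IsChain fun p q => q ⋖ p) : l.Nodup :=
  (List.isChain_iff_pairwise.mp (hl.imp fun _ _ h => h.lt : l.IsChain (· > ·))).imp ne_of_gt

instance [Fintype X] (x y : X) : Finite (CoverChain x y) :=
  Set.Finite.to_subtype <| (List.finite_length_le X (Fintype.card X)).subset
    fun _ hl => (nodup_of_isChain_covBy hl.1).length_le_card

lemma chainCount_self (x : X) : chainCount x x = 1 := by
  rw [chainCount_eq_card_coverChain, Nat.card_eq_one_iff_unique]
  refine ⟨⟨fun ⟨l, hl⟩ ⟨l', hl'⟩ => ?_⟩, ⟨⟨[x], List.isChain_singleton _, rfl, rfl⟩⟩⟩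
  suffices key : ∀ m : CoverChain x x, m.1 = [x] from
    Subtype.ext <| (key ⟨l, hl⟩).trans (key ⟨l', hl'⟩).symm
  rintro ⟨_ | ⟨a, _ | ⟨c, t⟩⟩, hc, hh, hl⟩
  · simp at hh
  · simpa using hh
  · obtain rfl : a = x := by simpa using hh
    obtain ⟨hca, hct⟩ := List.isChain_cons_cons.mp hc
    exact absurd hca.lt (le_of_isChain_covBy hct rfl (by simpa using hl)).not_gt

lemma chainCount_eq_zero_of_not_le {x y : X} (h : ¬y ≤ x) : chainCount x y = 0 := by
  rw [chainCount_eq_card_coverChain, Nat.card_eq_zero]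
  exact .inl ⟨fun ⟨_, hl, hx, hy⟩ => h (le_of_isChain_covBy hl hx hy)⟩

def consCoverChain (y b : X) (p : Σ x : {x // x ⋖ y}, CoverChain x.1 b) : CoverChain y b :=
  ⟨y :: p.2.1, List.isChain_cons.mpr ⟨fun c hc => by
      obtain rfl : p.1.1 = c := by simpa [p.2.2.2.1] using hc
      exact p.1.2, p.2.2.1⟩, rfl, by rw [List.getLast?_cons, p.2.2.2.2]; rfl⟩

lemma consCoverChain_bijective {y b : X} (hyb : y ≠ b) :
    Function.Bijective (consCoverChain y b) := by
  constructor
  · rintro ⟨⟨x₁, _⟩, ⟨l₁, h₁⟩⟩ ⟨⟨x₂, _⟩, ⟨l₂, h₂⟩⟩ h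
    obtain rfl : l₁ = l₂ := (List.cons.inj (congrArg Subtype.val h)).2
    obtain rfl : x₁ = x₂ := Option.some_inj.mp (h₁.2.1.symm.trans h₂.2.1)
    rfl
  · rintro ⟨l, hc, hh, hl⟩
    obtain ⟨_ | ⟨c, t⟩, rfl⟩ := List.head?_eq_some_iff.mp hh
    · exact absurd (by simpa using hl) hyb
    · obtain ⟨hcy, hct⟩ := List.isChain_cons_cons.mp hc
      exact ⟨⟨⟨c, hcy⟩, ⟨c :: t, hct, rfl, by simpa using hl⟩⟩, rfl⟩

lemma chainCount_eq_sum_covBy [Fintype X] {y b : X} (hyb : y ≠ b) :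
    chainCount y b = ∑ x ∈ univ.filter (· ⋖ y), chainCount x b := by
  rw [chainCount_eq_card_coverChain,
    ← Nat.card_congr (Equiv.ofBijective _ (consCoverChain_bijective hyb)), Nat.card_sigma]
  exact (Finset.sum_subtype (univ.filter (· ⋖ y)) (fun _ => by simp) (chainCount · b)).symm

noncomputable def linkIndicator (τ : X) : X → ℝ := fun y => if τ ≤ y then 1 else 0

lemma chainCount_eq_mul_linkIndicator {r : X → ℕ} (hr : StrictMono r) {m' : ℕ → ℕ → ℕ}
    (hmid : ∀ x y : X, y < x → chainCount x y = m' (r x) (r y)) (τ x : X) :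
    (chainCount x τ : ℝ) =
      (if r x = r τ then 1 else (m' (r x) (r τ) : ℝ)) * linkIndicator τ x := by
  by_cases hτx : τ ≤ x
  · rcases hτx.eq_or_lt with rfl | hlt
    · simp [chainCount_self, linkIndicator]
    · simp [hmid x τ hlt, (hr hlt).ne', linkIndicator, hτx]
  · simp [chainCount_eq_zero_of_not_le hτx, linkIndicator, hτx]

end CoverChains

lemma eq_prod_Icc_mul_of_succ {M : Type*} [CommMonoid M] {a c : ℕ → M} {i k : ℕ} (hik : i ≤ k)
    (h : ∀ j, i ≤ j → j < k → a (j + 1) = c (j + 1) * a j) :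
    a k = (∏ l ∈ Icc (i + 1) k, c l) * a i := by
  induction k, hik using Nat.le_induction with
  | base => simp
  | succ k hik ih =>
    rw [h k hik k.lt_succ_self, ih fun j hij hjk => h j hij (hjk.trans k.lt_succ_self),
      prod_Icc_succ_top (by omega)]
    ac_rfl

-- The degenerate cases `c = 0` and `s = 0` hold through `x / 0 = 0`.
lemma div_sq_mul_eq_sq_div {a b c p s : ℝ} (ha : a ≠ 0) (hp : p ≠ 0) (h : a * s = p * b * c) :
    (a / (p * c)) ^ 2 * s = b ^ 2 / s := by
  rcases eq_or_ne c 0 with rfl | hc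
  · obtain rfl : s = 0 := by simpa [ha] using h
    simp
  rcases eq_or_ne s 0 with rfl | hs
  · simp
  field_simp
  linear_combination (a * s + p * b * c) * h

section GradedPoset

variable {X : Type*} [Fintype X] [PartialOrder X] {r : X → ℕ}

lemma sum_mul_sum_covBy_eq (hcov : ∀ x y : X, x ⋖ y → r y = r x + 1) (j : ℕ) (f g : X → ℝ) :
    ∑ x ∈ univ.filter (r · = j), f x * ∑ y ∈ univ.filter (x ⋖ ·), g y =
      ∑ y ∈ univ.filter (r · = j + 1), (∑ x ∈ univ.filter (· ⋖ y), f x) * g y := by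
  simp_rw [mul_sum, sum_mul]
  refine sum_comm' fun x y => ?_
  simp only [mem_filter, mem_univ, true_and]
  constructor
  · rintro ⟨rfl, hxy⟩
    exact ⟨hxy, hcov x y hxy⟩
  · rintro ⟨hxy, hy⟩
    exact ⟨by have := hcov x y hxy; omega, hxy⟩

lemma ip_Dop_eq_ip_Uop (hcov : ∀ x y : X, x ⋖ y → r y = r x + 1) {π : X → ℝ} (hπ : ∀ x, 0 ≤ π x)
    {R : ℕ → ℕ} {k : ℕ}
    (hmarg : ∀ x, r x = k → (R (k + 1) : ℝ) * π x = ∑ y ∈ univ.filter (x ⋖ ·), π y)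
    (f g : X → ℝ) :
    ip r π k f (Dop r R π g) = ip r π (k + 1) (Uop r R f) g := by
  have hD : ∀ x ∈ univ.filter (r · = k), π x * f x * Dop r R π g x =
      (1 / R (k + 1)) * (f x * ∑ y ∈ univ.filter (x ⋖ ·), π y * g y) := by
    intro x hx
    replace hx : r x = k := (mem_filter.mp hx).2
    simp only [Dop, hx]
    rcases eq_or_ne (π x) 0 with h0 | h0
    · -- an element of weight zero only covers elements of weight zero
      have hup : ∀ y ∈ univ.filter (x ⋖ ·), π y = 0 :=
        (sum_eq_zero_iff_of_nonneg fun y _ => hπ y).mp (by rw [← hmarg x hx, h0, mul_zero])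
      have hsum : ∑ y ∈ univ.filter (x ⋖ ·), π y * g y = 0 :=
        sum_eq_zero fun y hy => by rw [hup y hy, zero_mul]
      simp [h0, hsum]
    · field_simp
  rw [ip, sum_congr rfl hD, ← mul_sum, sum_mul_sum_covBy_eq hcov, mul_sum, ip]
  refine sum_congr rfl fun y hy => ?_
  rw [Uop, (mem_filter.mp hy).2]
  ring

variable {τ : X} {n : ℕ → ℝ}

lemma mul_sum_covBy_linkIndicator (hcov : ∀ x y : X, x ⋖ y → r y = r x + 1)
    (hreg : ∀ x, (chainCount x τ : ℝ) = n (r x) * linkIndicator τ x) {y : X} {j : ℕ}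
    (hy : r y = j + 1) (hyτ : y ≠ τ) :
    n j * ∑ x ∈ univ.filter (· ⋖ y), linkIndicator τ x = n (j + 1) * linkIndicator τ y := by
  rw [← hy, ← hreg, chainCount_eq_sum_covBy hyτ, Nat.cast_sum, mul_sum]
  refine sum_congr rfl fun x hx => ?_
  have hxy := (mem_filter.mp hx).2
  rw [hreg, show r x = j by have := hcov x y hxy; omega]

lemma ip_linkIndicator_self (π : X → ℝ) (j : ℕ) :
    ip r π j (linkIndicator τ) (linkIndicator τ) =
      ∑ x ∈ univ.filter (r · = j), linkIndicator τ x * π x := by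
  refine sum_congr rfl fun x _ => ?_
  by_cases h : τ ≤ x <;> simp [linkIndicator, h]

lemma ip_linkIndicator_self_rank (hr : StrictMono r) (π : X → ℝ) :
    ip r π (r τ) (linkIndicator τ) (linkIndicator τ) = π τ := by
  rw [ip_linkIndicator_self, sum_eq_single_of_mem τ (by simp)]
  · simp [linkIndicator]
  · intro x hx hxτ
    have hτx : ¬τ ≤ x := fun h => (hr (h.lt_of_ne' hxτ)).ne' (mem_filter.mp hx).2
    simp [linkIndicator, hτx]

lemma mul_ip_linkIndicator_succ (hcov : ∀ x y : X, x ⋖ y → r y = r x + 1)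
    (hreg : ∀ x, (chainCount x τ : ℝ) = n (r x) * linkIndicator τ x)
    {π : X → ℝ} {R : ℕ → ℕ} {j : ℕ} (hj : r τ ≤ j)
    (hmarg : ∀ x, r x = j → (R (j + 1) : ℝ) * π x = ∑ y ∈ univ.filter (x ⋖ ·), π y) :
    n (j + 1) * ip r π (j + 1) (linkIndicator τ) (linkIndicator τ) =
      R (j + 1) * (n j * ip r π j (linkIndicator τ) (linkIndicator τ)) := by
  have hup : (R (j + 1) : ℝ) * ip r π j (linkIndicator τ) (linkIndicator τ) =
      ∑ y ∈ univ.filter (r · = j + 1), (∑ x ∈ univ.filter (· ⋖ y), linkIndicator τ x) * π y := by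
    rw [ip_linkIndicator_self, mul_sum, ← sum_mul_sum_covBy_eq hcov]
    refine sum_congr rfl fun x hx => ?_
    rw [← hmarg x (mem_filter.mp hx).2]
    ring
  rw [mul_left_comm, hup, mul_sum, ip_linkIndicator_self, mul_sum]
  refine sum_congr rfl fun y hy => ?_
  have hy : r y = j + 1 := (mem_filter.mp hy).2
  rw [← mul_assoc (n j), mul_sum_covBy_linkIndicator hcov hreg hy (by rintro rfl; omega),
    mul_assoc]

lemma mul_ip_linkIndicator_eq_prod (hcov : ∀ x y : X, x ⋖ y → r y = r x + 1) (hr : StrictMono r)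
    (hreg : ∀ x, (chainCount x τ : ℝ) = n (r x) * linkIndicator τ x)
    {π : X → ℝ} {R : ℕ → ℕ} {k : ℕ} (hk : r τ ≤ k)
    (hmarg : ∀ j, r τ ≤ j → j < k → ∀ x, r x = j →
      (R (j + 1) : ℝ) * π x = ∑ y ∈ univ.filter (x ⋖ ·), π y) :
    n k * ip r π k (linkIndicator τ) (linkIndicator τ) =
      (∏ l ∈ Icc (r τ + 1) k, (R l : ℝ)) * π τ := by
  have hbase : n (r τ) = 1 := by simpa [chainCount_self, linkIndicator] using (hreg τ).symm
  refine (eq_prod_Icc_mul_of_succ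
    (a := fun j => n j * ip r π j (linkIndicator τ) (linkIndicator τ)) (c := fun l => (R l : ℝ))
    hk fun j hj hjk => mul_ip_linkIndicator_succ hcov hreg hj (hmarg j hj hjk)).trans ?_
  rw [hbase, ip_linkIndicator_self_rank hr, one_mul]

lemma ip_linkIndicator_self_eq (hcov : ∀ x y : X, x ⋖ y → r y = r x + 1) (hr : StrictMono r)
    (hreg : ∀ x, (chainCount x τ : ℝ) = n (r x) * linkIndicator τ x)
    {π : X → ℝ} {R : ℕ → ℕ} {k : ℕ} (hk : r τ ≤ k)
    (hmarg : ∀ j, r τ ≤ j → j < k → ∀ x, r x = j →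
      (R (j + 1) : ℝ) * π x = ∑ y ∈ univ.filter (x ⋖ ·), π y)
    {m Rk : ℕ} (hnk : n k = m) (hm : m ≠ 0) (hRk : m * Rk = ∏ l ∈ Icc (r τ + 1) k, R l) :
    ip r π k (linkIndicator τ) (linkIndicator τ) = Rk * π τ := by
  refine mul_left_cancel₀ (hnk ▸ Nat.cast_ne_zero.mpr hm) ?_
  rw [mul_ip_linkIndicator_eq_prod hcov hr hreg hk hmarg, hnk, ← mul_assoc, ← Nat.cast_mul, hRk,
    Nat.cast_prod]

lemma Uop_linkIndicator (hcov : ∀ x y : X, x ⋖ y → r y = r x + 1)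
    (hreg : ∀ x, (chainCount x τ : ℝ) = n (r x) * linkIndicator τ x) (R : ℕ → ℕ) {k : ℕ}
    (hk : r τ ≤ k) (hnk : n k ≠ 0) {y : X} (hy : r y = k + 1) :
    Uop r R (linkIndicator τ) y = n (k + 1) / (n k * R (k + 1)) * linkIndicator τ y := by
  have h := mul_sum_covBy_linkIndicator hcov hreg hy (by rintro rfl; omega)
  rw [Uop, hy, div_mul_eq_mul_div (n (k + 1)), ← h]
  field_simp

lemma ip_Uop_linkIndicator (hcov : ∀ x y : X, x ⋖ y → r y = r x + 1)
    (hreg : ∀ x, (chainCount x τ : ℝ) = n (r x) * linkIndicator τ x) (π : X → ℝ) (R : ℕ → ℕ)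
    {k : ℕ} (hk : r τ ≤ k) (hnk : n k ≠ 0) :
    ip r π (k + 1) (Uop r R (linkIndicator τ)) (Uop r R (linkIndicator τ)) =
      (n (k + 1) / (n k * R (k + 1))) ^ 2 *
        ip r π (k + 1) (linkIndicator τ) (linkIndicator τ) := by
  rw [ip, ip, mul_sum]
  refine sum_congr rfl fun y hy => ?_
  rw [Uop_linkIndicator hcov hreg R hk hnk (mem_filter.mp hy).2]
  ring

end GradedPoset

theorem link_nonexpansion_upper_walk_general {X : Type*} [Fintype X] [PartialOrder X]
    (r : X → ℕ) (π : X → ℝ) (R : ℕ → ℕ) (m' : ℕ → ℕ → ℕ)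
    (i k : ℕ) (hik : i ≤ k)
    (hmono : ∀ x y : X, x < y → r x < r y)
    (hcov : ∀ x y : X, x ⋖ y → r y = r x + 1)
    (hπ : ∀ x, 0 ≤ π x)
    (hmid : ∀ x y : X, y < x → chainCount x y = m' (r x) (r y))
    (hmposk : 0 < m' k i) (hmposk1 : 0 < m' (k + 1) i)
    (Rki : ℕ) (hRki : m' k i * Rki = ∏ j ∈ Finset.Icc (i + 1) k, R j)
    (Rk1i : ℕ) (hRk1i : m' (k + 1) i * Rk1i = ∏ j ∈ Finset.Icc (i + 1) (k + 1), R j)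
    (hmarg : ∀ j, i ≤ j → j ≤ k → ∀ x : X, r x = j →
      (R (j + 1) : ℝ) * π x = ∑ y ∈ univ.filter (fun y => x ⋖ y), π y)
    (τ : X) (hτ : r τ = i)
    (χ : X → ℝ) (hχ : χ = fun y => if τ ≤ y then (1 : ℝ) else 0) :
    ip r π k χ (Dop r R π (Uop r R χ)) = ip r π (k + 1) (Uop r R χ) (Uop r R χ) ∧
    ip r π (k + 1) (Uop r R χ) (Uop r R χ) = ((Rki : ℝ) ^ 2 / (Rk1i : ℝ)) * π τ ∧
    ip r π k χ (Dop r R π (Uop r R χ)) = ((Rki : ℝ) / (Rk1i : ℝ)) * ip r π k χ χ := by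
  obtain rfl : χ = linkIndicator τ := hχ
  subst hτ
  have hr : StrictMono r := fun x y => hmono x y
  -- `hmid` leaves `m' i i` free; the only chain from `τ` to itself is `[τ]`.
  set n : ℕ → ℝ := fun j => if j = r τ then 1 else (m' j (r τ) : ℝ)
  have hreg := chainCount_eq_mul_linkIndicator hr hmid τ
  have hnk : n k = m' k (r τ) := by
    rcases hik.eq_or_lt with rfl | hlt
    · simp [n, Nat.eq_one_of_mul_eq_one_right (hRki.trans (by simp))]
    · simp [n, hlt.ne']
  have hnk1 : n (k + 1) = m' (k + 1) (r τ) := if_neg (by omega)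
  have hSk := ip_linkIndicator_self_eq (n := n) (R := R) hcov hr hreg hik
    (fun l hl hlk => hmarg l hl hlk.le) hnk hmposk.ne' hRki
  have hSk1 := ip_linkIndicator_self_eq (n := n) (R := R) hcov hr hreg (by omega)
    (fun l hl hlk => hmarg l hl (by omega)) hnk1 hmposk1.ne' hRk1i
  have hB : ip r π (k + 1) (Uop r R (linkIndicator τ)) (Uop r R (linkIndicator τ)) =
      (Rki : ℝ) ^ 2 / Rk1i * π τ := by
    rw [ip_Uop_linkIndicator hcov hreg π R hik (hnk ▸ Nat.cast_ne_zero.mpr hmposk.ne'), hnk, hnk1,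
      hSk1, ← mul_assoc, div_sq_mul_eq_sq_div (Nat.cast_ne_zero.mpr hmposk1.ne')
      (Nat.cast_ne_zero.mpr hmposk.ne')]
    exact_mod_cast (by rw [hRk1i, prod_Icc_succ_top (by omega), ← hRki] :
      m' (k + 1) (r τ) * Rk1i = m' k (r τ) * Rki * R (k + 1))
  have hA := ip_Dop_eq_ip_Uop hcov hπ (hmarg k hik le_rfl)
  refine ⟨hA _ _, hB, ?_⟩
  rw [hA, hB, hSk]
  ring

/-- **Non-expansion of a link under the upper walk.** For a rank-`i` element `τ` with
indicator `χ = 𝟙_{X^k_τ}` of its `k`-dimensional link: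
`⟨χ, D_{k+1}U_k χ⟩ = ⟨U_k χ, U_k χ⟩ = (R(k,i)²/R(k+1,i)) π τ`, whence
`⟨χ, D_{k+1}U_k χ⟩ / ⟨χ, χ⟩ = R(k,i)/R(k+1,i)`. -/
theorem link_nonexpansion_upper_walk {X : Type*} [Fintype X] [PartialOrder X]
    (d : ℕ) (r : X → ℕ) (π : X → ℝ) (R : ℕ → ℕ) (m' : ℕ → ℕ → ℕ)
    (i k : ℕ) (hik : i ≤ k) (hkd : k < d)
    (hrd : ∀ x, r x ≤ d)
    (hmono : ∀ x y : X, x < y → r x < r y)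
    (hcov : ∀ x y : X, x ⋖ y → r y = r x + 1)
    (hπ : ∀ x, 0 ≤ π x)
    (hdown : ∀ y : X, 1 ≤ r y → (univ.filter (fun x => x ⋖ y)).card = R (r y))
    (hRpos : ∀ j, 1 ≤ j → j ≤ d → 0 < R j)
    (hmid : ∀ x y : X, y < x → chainCount x y = m' (r x) (r y))
    (hmposk : 0 < m' k i) (hmposk1 : 0 < m' (k + 1) i)
    (Rki : ℕ) (hRki : m' k i * Rki = ∏ j ∈ Finset.Icc (i + 1) k, R j)
    (Rk1i : ℕ) (hRk1i : m' (k + 1) i * Rk1i = ∏ j ∈ Finset.Icc (i + 1) (k + 1), R j)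
    (hmarg : ∀ j, i ≤ j → j ≤ k → ∀ x : X, r x = j →
      (R (j + 1) : ℝ) * π x = ∑ y ∈ univ.filter (fun y => x ⋖ y), π y)
    (τ : X) (hτ : r τ = i)
    (χ : X → ℝ) (hχ : χ = fun y => if τ ≤ y then (1 : ℝ) else 0) :
    ip r π k χ (Dop r R π (Uop r R χ)) = ip r π (k + 1) (Uop r R χ) (Uop r R χ) ∧
    ip r π (k + 1) (Uop r R χ) (Uop r R χ) = ((Rki : ℝ) ^ 2 / (Rk1i : ℝ)) * π τ ∧
    ip r π k χ (Dop r R π (Uop r R χ)) = ((Rki : ℝ) / (Rk1i : ℝ)) * ip r π k χ χ :=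
  link_nonexpansion_upper_walk_general r π R m' i k hik hmono hcov hπ hmid hmposk hmposk1 Rki hRki
    Rk1i hRk1i hmarg τ hτ χ hχ
end

section
/- For integers 0 ≤ ℓ ≤ t ≤ k and q > 1, the following identity holds: (1 / (q^{(k−t)²} C(k,t)_q)) · Σ_{i=0}^{k−t} (−1)^{k−t−i} q^{binom(k−t−i,2)} C(k−t,i)_q C(k+i−ℓ,i)_q = C(k−(k−t),ℓ)_q / C(k,ℓ)_q = C(t,ℓ)_q / C(k,ℓ)_q. -/
/-- Gaussian binomial coefficient `C(a,b)_q = ∏_{t=0}^{b-1} (q^{a−t}−1)/(q^{b−t}−1)` over ℝ. -/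
noncomputable def qbinomR (q : ℝ) (a b : ℕ) : ℝ :=
  ∏ t ∈ Finset.range b, (q ^ (a - t) - 1) / (q ^ (b - t) - 1)

/-!
Put `m = k - t` and `n = k - ℓ`. The q-Vandermonde identity expands
`C(n+i, i) = ∑_j q^{j²} C(i,j) C(n,j)`, and the weights `(-1)^{m-i} q^{binom(m-i,2)} C(m,i)`
form row `m` of the inverse of the unitriangular matrix `(C(i,j))`: by trinomial revision this
reduces to `∑_s (-1)^s q^{binom(s,2)} C(M,s) = [M = 0]`, which telescopes by Pascal's rule.
Hence the alternating sum is `q^{m²} C(n,m)`, and trinomial revision once more turns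
`C(k-ℓ, k-t) / C(k,t)` into `C(t,ℓ) / C(k,ℓ)`.
-/

open Finset

noncomputable def qFactorial (q : ℝ) (n : ℕ) : ℝ := ∏ j ∈ range n, (q ^ (j + 1) - 1)

@[simp]
lemma qFactorial_zero (q : ℝ) : qFactorial q 0 = 1 := prod_range_zero _

lemma qFactorial_succ (q : ℝ) (n : ℕ) :
    qFactorial q (n + 1) = qFactorial q n * (q ^ (n + 1) - 1) :=
  prod_range_succ _ _

lemma pow_succ_sub_one_pos {q : ℝ} (hq : 1 < q) (n : ℕ) : 0 < q ^ (n + 1) - 1 :=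
  sub_pos.2 (one_lt_pow₀ hq n.succ_ne_zero)

lemma qFactorial_pos {q : ℝ} (hq : 1 < q) (n : ℕ) : 0 < qFactorial q n :=
  prod_pos fun j _ ↦ pow_succ_sub_one_pos hq j

lemma qbinomR_eq_prod_div_qFactorial (q : ℝ) (a b : ℕ) :
    qbinomR q a b = (∏ t ∈ range b, (q ^ (a - t) - 1)) / qFactorial q b := by
  rw [qbinomR, prod_div_distrib, qFactorial, ← prod_range_reflect (fun j ↦ q ^ (j + 1) - 1) b]
  congr 1
  exact prod_congr rfl fun t ht ↦ by rw [show b - 1 - t + 1 = b - t by simp at ht; omega]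

@[simp]
lemma qbinomR_zero_right (q : ℝ) (a : ℕ) : qbinomR q a 0 = 1 := prod_range_zero _

lemma qbinomR_eq_zero_of_lt (q : ℝ) {a b : ℕ} (h : a < b) : qbinomR q a b = 0 :=
  prod_eq_zero (mem_range.2 h) (by simp)

lemma qbinomR_succ_succ (q : ℝ) (a b : ℕ) :
    qbinomR q (a + 1) (b + 1) = (q ^ (a + 1) - 1) / (q ^ (b + 1) - 1) * qbinomR q a b := by
  rw [qbinomR, prod_range_succ', mul_comm, qbinomR]
  simp only [Nat.sub_zero]
  congr 1
  refine prod_congr rfl fun t _ ↦ ?_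
  rw [Nat.add_sub_add_right, Nat.add_sub_add_right]

lemma qbinomR_succ_right (q : ℝ) (a b : ℕ) :
    qbinomR q a (b + 1) = (q ^ (a - b) - 1) / (q ^ (b + 1) - 1) * qbinomR q a b := by
  rw [qbinomR_eq_prod_div_qFactorial, qbinomR_eq_prod_div_qFactorial, prod_range_succ,
    qFactorial_succ, div_mul_div_comm, mul_comm (q ^ (a - b) - 1), mul_comm (q ^ (b + 1) - 1)]

lemma qbinomR_eq_qFactorial_div {q : ℝ} (hq : 1 < q) {a b : ℕ} (h : b ≤ a) :
    qbinomR q a b = qFactorial q a / (qFactorial q b * qFactorial q (a - b)) := by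
  induction b with
  | zero => simp [(qFactorial_pos hq a).ne']
  | succ b ih =>
    obtain ⟨c, rfl⟩ : ∃ c, a = b + 1 + c := ⟨a - (b + 1), by omega⟩
    rw [qbinomR_succ_right, ih (by omega), show b + 1 + c - b = c + 1 by omega,
      Nat.add_sub_cancel_left, qFactorial_succ, qFactorial_succ]
    have := qFactorial_pos hq b
    have := qFactorial_pos hq c
    have := pow_succ_sub_one_pos hq b
    have := pow_succ_sub_one_pos hq c
    field_simp

lemma qbinomR_pos {q : ℝ} (hq : 1 < q) {a b : ℕ} (h : b ≤ a) : 0 < qbinomR q a b := by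
  rw [qbinomR_eq_qFactorial_div hq h]
  have := qFactorial_pos hq a
  have := qFactorial_pos hq b
  have := qFactorial_pos hq (a - b)
  positivity

lemma qbinomR_self {q : ℝ} (hq : 1 < q) (a : ℕ) : qbinomR q a a = 1 := by
  rw [qbinomR_eq_qFactorial_div hq le_rfl, Nat.sub_self, qFactorial_zero, mul_one,
    div_self (qFactorial_pos hq a).ne']

lemma qbinomR_sub {q : ℝ} (hq : 1 < q) {a b : ℕ} (h : b ≤ a) :
    qbinomR q a (a - b) = qbinomR q a b := by
  rw [qbinomR_eq_qFactorial_div hq (Nat.sub_le a b), qbinomR_eq_qFactorial_div hq h,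
    Nat.sub_sub_self h, mul_comm]

lemma qbinomR_mul_qbinomR_sub_comm {q : ℝ} (hq : 1 < q) (m a b : ℕ) :
    qbinomR q m a * qbinomR q (m - a) b = qbinomR q m b * qbinomR q (m - b) a := by
  by_cases h : a + b ≤ m
  · rw [qbinomR_eq_qFactorial_div hq (by omega), qbinomR_eq_qFactorial_div hq (by omega),
      qbinomR_eq_qFactorial_div hq (by omega), qbinomR_eq_qFactorial_div hq (by omega),
      Nat.sub_sub, Nat.sub_sub, add_comm b]
    have := qFactorial_pos hq (m - a)
    have := qFactorial_pos hq (m - b)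
    have := qFactorial_pos hq a
    have := qFactorial_pos hq b
    have := qFactorial_pos hq (m - (a + b))
    field_simp
  · rcases (by omega : m - a < b ∨ m < a) with h₁ | h₁ <;>
      rcases (by omega : m - b < a ∨ m < b) with h₂ | h₂ <;>
      simp [qbinomR_eq_zero_of_lt, h₁, h₂]

lemma qbinomR_succ_succ_eq_add {q : ℝ} (hq : 1 < q) (a b : ℕ) :
    qbinomR q (a + 1) (b + 1) = qbinomR q a b + q ^ (b + 1) * qbinomR q a (b + 1) := by
  rcases le_or_gt b a with h | h
  · rw [qbinomR_succ_succ, qbinomR_succ_right, show a + 1 = b + 1 + (a - b) by omega, pow_add]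
    have := pow_succ_sub_one_pos hq b
    field_simp
    ring
  · simp [qbinomR_eq_zero_of_lt, h, h.trans (Nat.lt_succ_self b)]

lemma qbinomR_succ_succ_eq_pow_mul_add {q : ℝ} (hq : 1 < q) (a b : ℕ) :
    qbinomR q (a + 1) (b + 1) = q ^ (a - b) * qbinomR q a b + qbinomR q a (b + 1) := by
  rcases le_or_gt b a with h | h
  · rw [qbinomR_succ_succ, qbinomR_succ_right, show a + 1 = b + 1 + (a - b) by omega, pow_add]
    have := pow_succ_sub_one_pos hq b
    field_simp
    ring
  · simp [qbinomR_eq_zero_of_lt, h, h.trans (Nat.lt_succ_self b)]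

lemma sum_range_alternating_qbinomR {q : ℝ} (hq : 1 < q) {M N : ℕ} (h : M ≤ N) :
    ∑ s ∈ range (N + 1), (-1 : ℝ) ^ s * q ^ s.choose 2 * qbinomR q M s =
      if M = 0 then 1 else 0 := by
  rw [sum_range_succ']
  cases M with
  | zero => simp [qbinomR_eq_zero_of_lt]
  | succ M =>
    set c : ℕ → ℝ := fun s ↦ (-1 : ℝ) ^ s * q ^ (s + 1).choose 2 * qbinomR q M s with hc
    have htel : ∀ s, (-1 : ℝ) ^ (s + 1) * q ^ (s + 1).choose 2 * qbinomR q (M + 1) (s + 1) =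
        c (s + 1) - c s := fun s ↦ by
      simp only [hc]
      rw [qbinomR_succ_succ_eq_add hq, Nat.choose_succ_succ' (s + 1), Nat.choose_one_right,
        pow_add]
      ring
    rw [sum_congr rfl fun s _ ↦ htel s, sum_range_sub]
    simp [hc, qbinomR_eq_zero_of_lt q (show M < N by omega)]

lemma sum_range_qbinomR_inversion {q : ℝ} (hq : 1 < q) {m j : ℕ} (hj : j ≤ m) :
    ∑ i ∈ range (m + 1),
        (-1 : ℝ) ^ (m - i) * q ^ (m - i).choose 2 * qbinomR q m i * qbinomR q i j =
      if j = m then 1 else 0 := by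
  rw [← sum_range_reflect]
  have hterm : ∀ s ∈ range (m + 1),
      (-1 : ℝ) ^ (m - (m + 1 - 1 - s)) * q ^ (m - (m + 1 - 1 - s)).choose 2 *
          qbinomR q m (m + 1 - 1 - s) * qbinomR q (m + 1 - 1 - s) j =
        qbinomR q m j * ((-1 : ℝ) ^ s * q ^ s.choose 2 * qbinomR q (m - j) s) := fun s hs ↦ by
    have hs : s ≤ m := Nat.lt_succ_iff.1 (mem_range.1 hs)
    rw [Nat.add_sub_cancel, Nat.sub_sub_self hs, qbinomR_sub hq hs, mul_assoc _ (qbinomR q m s),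
      qbinomR_mul_qbinomR_sub_comm hq]
    ring
  rw [sum_congr rfl hterm, ← mul_sum, sum_range_alternating_qbinomR hq (Nat.sub_le m j)]
  by_cases hjm : j = m
  · simp [hjm, qbinomR_self hq]
  · simp [hjm, show m - j ≠ 0 by omega]

lemma qbinomR_add_eq_sum {q : ℝ} (hq : 1 < q) (n i d : ℕ) :
    qbinomR q (n + i) (i + d) =
      ∑ j ∈ range (i + 1), q ^ (j * (j + d)) * qbinomR q i j * qbinomR q n (j + d) := by
  induction i generalizing d with
  | zero => simp
  | succ i ih =>
    have hterm : ∀ j ∈ range (i + 1),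
        q ^ ((j + 1) * (j + 1 + d)) * qbinomR q (i + 1) (j + 1) * qbinomR q n (j + 1 + d) =
          q ^ (i + d + 1) * (q ^ (j * (j + (d + 1))) * qbinomR q i j * qbinomR q n (j + (d + 1)))
          + q ^ ((j + 1) * (j + 1 + d)) * qbinomR q i (j + 1) * qbinomR q n (j + 1 + d) :=
      fun j hj ↦ by
        obtain ⟨c, rfl⟩ : ∃ c, i = j + c := ⟨i - j, by have := mem_range.1 hj; omega⟩
        have hpow : q ^ ((j + 1) * (j + 1 + d)) * q ^ (j + c - j) =
            q ^ (j + c + d + 1) * q ^ (j * (j + (d + 1))) := by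
          rw [← pow_add, ← pow_add, Nat.add_sub_cancel_left]
          ring_nf
        rw [qbinomR_succ_succ_eq_pow_mul_add hq, show j + 1 + d = j + (d + 1) by ring]
        linear_combination qbinomR q (j + c) j * qbinomR q n (j + (d + 1)) * hpow
    have hshift : ∑ j ∈ range (i + 1),
          q ^ ((j + 1) * (j + 1 + d)) * qbinomR q i (j + 1) * qbinomR q n (j + 1 + d) +
          q ^ (0 * (0 + d)) * qbinomR q (i + 1) 0 * qbinomR q n (0 + d) =
        qbinomR q (n + i) (i + d) := by
      calc _ = ∑ j ∈ range (i + 1 + 1),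
              q ^ (j * (j + d)) * qbinomR q i j * qbinomR q n (j + d) := by
            rw [sum_range_succ' _ (i + 1)]
            simp
        _ = qbinomR q (n + i) (i + d) := by
            rw [sum_range_succ, qbinomR_eq_zero_of_lt q i.lt_succ_self, ih d]
            simp
    rw [sum_range_succ', sum_congr rfl hterm, sum_add_distrib, ← mul_sum, ← ih (d + 1),
      show n + (i + 1) = n + i + 1 by ring, show i + 1 + d = i + d + 1 by ring,
      qbinomR_succ_succ_eq_add hq, show i + (d + 1) = i + d + 1 by ring]
    linear_combination -hshift

lemma sum_range_alternating_qbinomR_mul_qbinomR_add {q : ℝ} (hq : 1 < q) (n m : ℕ) :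
    ∑ i ∈ range (m + 1),
        (-1 : ℝ) ^ (m - i) * q ^ (m - i).choose 2 * qbinomR q m i * qbinomR q (n + i) i =
      q ^ (m ^ 2) * qbinomR q n m := by
  have hexpand : ∀ i ∈ range (m + 1),
      qbinomR q (n + i) i = ∑ j ∈ range (m + 1), q ^ (j * j) * qbinomR q i j * qbinomR q n j :=
    fun i hi ↦ by
      have hvdm := qbinomR_add_eq_sum hq n i 0
      simp only [add_zero] at hvdm
      rw [hvdm]
      refine sum_subset (range_subset_range.2 (mem_range.1 hi)) fun j _ hj ↦ ?_
      rw [qbinomR_eq_zero_of_lt q (by simpa using hj), mul_zero, zero_mul]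
  calc _ = ∑ i ∈ range (m + 1), ∑ j ∈ range (m + 1),
          (-1 : ℝ) ^ (m - i) * q ^ (m - i).choose 2 * qbinomR q m i *
            (q ^ (j * j) * qbinomR q i j * qbinomR q n j) :=
        sum_congr rfl fun i hi ↦ by rw [hexpand i hi, mul_sum]
    _ = ∑ j ∈ range (m + 1), q ^ (j * j) * qbinomR q n j * ∑ i ∈ range (m + 1),
          (-1 : ℝ) ^ (m - i) * q ^ (m - i).choose 2 * qbinomR q m i * qbinomR q i j := by
        rw [sum_comm]
        refine sum_congr rfl fun j _ ↦ ?_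
        rw [mul_sum]
        exact sum_congr rfl fun i _ ↦ by ring
    _ = ∑ j ∈ range (m + 1), q ^ (j * j) * qbinomR q n j * if j = m then 1 else 0 :=
        sum_congr rfl fun j hj ↦ by
          rw [sum_range_qbinomR_inversion hq (Nat.lt_succ_iff.1 (mem_range.1 hj))]
    _ = q ^ (m ^ 2) * qbinomR q n m := by simp [sq]

/-- **Partial-swap walk eigenvalue identity on the Grassmann.** For `0 ≤ ℓ ≤ t ≤ k` and
`q > 1`:
`(1/(q^{(k−t)²} C(k,t)_q)) ∑_{i=0}^{k−t} (−1)^{k−t−i} q^{binom(k−t−i,2)}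
  C(k−t,i)_q C(k+i−ℓ,i)_q = C(t,ℓ)_q / C(k,ℓ)_q`. -/
theorem partial_swap_walk_eigenvalue_identity
    (q : ℝ) (hq : 1 < q) (k t ℓ : ℕ) (hℓt : ℓ ≤ t) (htk : t ≤ k) :
    (1 / (q ^ ((k - t) ^ 2) * qbinomR q k t))
        * ∑ i ∈ Finset.range (k - t + 1),
            (-1 : ℝ) ^ (k - t - i) * q ^ Nat.choose (k - t - i) 2
              * qbinomR q (k - t) i * qbinomR q (k + i - ℓ) i
      = qbinomR q t ℓ / qbinomR q k ℓ := by
  have hsum : ∑ i ∈ range (k - t + 1),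
      (-1 : ℝ) ^ (k - t - i) * q ^ (k - t - i).choose 2
        * qbinomR q (k - t) i * qbinomR q (k + i - ℓ) i =
      q ^ ((k - t) ^ 2) * qbinomR q (k - ℓ) (k - t) := by
    rw [← sum_range_alternating_qbinomR_mul_qbinomR_add hq]
    exact sum_congr rfl fun i _ ↦ by rw [show k + i - ℓ = k - ℓ + i by omega]
  have hrev : qbinomR q k ℓ * qbinomR q (k - ℓ) (k - t) = qbinomR q k t * qbinomR q t ℓ := by
    rw [qbinomR_mul_qbinomR_sub_comm hq, Nat.sub_sub_self htk, qbinomR_sub hq htk]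
  have := qbinomR_pos hq htk
  have := qbinomR_pos hq (hℓt.trans htk)
  rw [hsum]
  field_simp
  linear_combination hrev
end

section
/- Let G be a weighted graph whose non-lazy adjacency (random-walk) operator A and lower walk UD satisfy ‖A − UD‖ ≤ γ in operator norm with respect to the stationary inner product. Then every vertex v has stationary weight at most γ; more precisely ⟨𝟙_v, UD 𝟙_v⟩ / ⟨𝟙_v, 𝟙_v⟩ ≤ γ. -/
attribute [local instance] Classical.propDecidable

/-- The stationary inner product `⟨f,g⟩ = ∑_v π v f v g v` of a weighted graph. -/
noncomputable def ipG {Vt : Type*} [Fintype Vt] (π : Vt → ℝ) (f g : Vt → ℝ) : ℝ :=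
  ∑ v, π v * f v * g v

/-- The lower walk `U₀D₁` of a graph: project a vertex function to its global expectation
(walk down to the empty face and back up). -/
noncomputable def lowerWalk {Vt : Type*} [Fintype Vt] (π : Vt → ℝ) (f : Vt → ℝ) : Vt → ℝ :=
  fun _ => ∑ u, π u * f u

/-- **γ-spectral expanders are γ-non-lazy.** If the non-lazy walk `A` of a weighted graph
satisfies `‖A − UD‖ ≤ γ` with respect to the stationary inner product, then every vertex
has stationary weight at most `γ`; more precisely
`⟨𝟙_v, UD 𝟙_v⟩ / ⟨𝟙_v, 𝟙_v⟩ ≤ γ`. -/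
theorem spectral_expander_nonlazy {Vt : Type*} [Fintype Vt]
    (π : Vt → ℝ) (hπ : ∀ v, 0 ≤ π v) (hsum : ∑ v, π v = 1)
    (A : Matrix Vt Vt ℝ) (hA : ∀ v, A v v = 0)
    (γ : ℝ) (hγ : 0 ≤ γ)
    (hnorm : ∀ f : Vt → ℝ,
      Real.sqrt (ipG π (fun v => lowerWalk π f v - A.mulVec f v)
          (fun v => lowerWalk π f v - A.mulVec f v))
        ≤ γ * Real.sqrt (ipG π f f)) :
    ∀ v : Vt, π v ≤ γ ∧
      ipG π (fun u => if u = v then (1 : ℝ) else 0)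
          (lowerWalk π (fun u => if u = v then (1 : ℝ) else 0))
        / ipG π (fun u => if u = v then (1 : ℝ) else 0)
            (fun u => if u = v then (1 : ℝ) else 0) ≤ γ := by
  intro v
  set f : Vt → ℝ := fun u => if u = v then (1 : ℝ) else 0 with hf
  have hff : ipG π f f = π v := by
    simp [ipG, hf, mul_ite, ite_mul, mul_one, mul_zero, zero_mul,
      Finset.sum_ite_eq']
  have hlw : ∀ u, lowerWalk π f u = π v := by
    intro u
    simp [lowerWalk, hf, mul_ite, mul_one, mul_zero, Finset.sum_ite_eq']
  have hmv : ∀ u, A.mulVec f u = A u v := by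
    intro u
    simp [Matrix.mulVec, dotProduct, hf, mul_ite, mul_one, mul_zero,
      Finset.sum_ite_eq']
  have hkey : π v ≤ γ := by
    rcases eq_or_lt_of_le (hπ v) with h0 | hpos
    · linarith
    have h := hnorm f
    rw [hff] at h
    have hlow : (π v)^3 ≤ ipG π (fun u => lowerWalk π f u - A.mulVec f u)
        (fun u => lowerWalk π f u - A.mulVec f u) := by
      have hterm : π v * (lowerWalk π f v - A.mulVec f v) *
          (lowerWalk π f v - A.mulVec f v) = (π v)^3 := by
        rw [hlw, hmv, hA]; ring
      calc (π v)^3 = π v * (lowerWalk π f v - A.mulVec f v) *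
            (lowerWalk π f v - A.mulVec f v) := hterm.symm
        _ ≤ ∑ u, π u * (lowerWalk π f u - A.mulVec f u) *
            (lowerWalk π f u - A.mulVec f u) := by
            apply Finset.single_le_sum (f := fun u => π u *
              (lowerWalk π f u - A.mulVec f u) * (lowerWalk π f u - A.mulVec f u))
            · intro u _
              have := mul_self_nonneg (lowerWalk π f u - A.mulVec f u)
              have := hπ u
              nlinarith
            · exact Finset.mem_univ v
        _ = _ := rfl
    have hsq : Real.sqrt ((π v)^3) ≤ γ * Real.sqrt (π v) :=
      le_trans (Real.sqrt_le_sqrt hlow) h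
    have hsq3 : Real.sqrt ((π v)^3) = π v * Real.sqrt (π v) := by
      rw [show (π v)^3 = (π v)^2 * π v by ring, Real.sqrt_mul (sq_nonneg _),
        Real.sqrt_sq (hπ v)]
    rw [hsq3] at hsq
    have hspos : 0 < Real.sqrt (π v) := Real.sqrt_pos.mpr hpos
    exact le_of_mul_le_mul_right hsq hspos
  refine ⟨hkey, ?_⟩
  have hnum : ipG π f (lowerWalk π f) = π v * π v := by
    simp only [ipG]
    have : ∀ u, π u * f u * lowerWalk π f u = (if u = v then π u * π v else 0) := by
      intro u
      rw [hlw]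
      simp [hf, mul_ite, ite_mul, mul_one, mul_zero, zero_mul]
    simp only [this, Finset.sum_ite_eq', Finset.mem_univ, if_true]
  rw [hnum, hff]
  rcases eq_or_lt_of_le (hπ v) with h0 | hpos
  · rw [← h0]; simpa using hγ
  · rw [mul_div_assoc, div_self (ne_of_gt hpos), mul_one]; exact hkey
end

section
/- Let f = f₀ + f₁ + ... + f_k be a decomposition of a vector f in a finite-dimensional real inner product space such that |⟨f_i, f_j⟩| ≤ ε‖f_i‖‖f_j‖ for all i ≠ j with (k+1)²ε ≤ 1/2. Then Σ_{j=0}^{k} ‖f_j‖ ≤ 2√(k+1) · ‖f‖, and for any index subset I, −Σ_{j∈I} ⟨f, f_j⟩ ≤ 4(k+1)² ε ‖f‖². -/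
open scoped RealInnerProductSpace

/-- **Approximate orthogonality lemma (BHKL / DDFK corollary).** If `f = f₀ + ⋯ + f_k` is a
nearly orthogonal decomposition, `|⟨f_i, f_j⟩| ≤ ε ‖f_i‖ ‖f_j‖` for `i ≠ j` with
`(k+1)² ε ≤ 1/2`, then `∑ ‖f_j‖ ≤ 2 √(k+1) ‖f‖`, and for any index subset `I`,
`−∑_{j∈I} ⟨f, f_j⟩ ≤ 4 (k+1)² ε ‖f‖²`. -/
theorem approx_orthogonal_decomposition
    {V : Type*} [NormedAddCommGroup V] [InnerProductSpace ℝ V]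
    (k : ℕ) (g : Fin (k + 1) → V) (ε : ℝ) (hε0 : 0 ≤ ε)
    (hε : ((k : ℝ) + 1) ^ 2 * ε ≤ 1 / 2)
    (horth : ∀ i j, i ≠ j → |⟪g i, g j⟫| ≤ ε * ‖g i‖ * ‖g j‖) :
    (∑ j, ‖g j‖) ≤ 2 * Real.sqrt ((k : ℝ) + 1) * ‖∑ j, g j‖ ∧
    ∀ I : Finset (Fin (k + 1)),
      -∑ j ∈ I, ⟪∑ i, g i, g j⟫ ≤ 4 * ((k : ℝ) + 1) ^ 2 * ε * ‖∑ i, g i‖ ^ 2 := by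
  set n : ℝ := (k : ℝ) + 1 with hn
  set f : V := ∑ i, g i with hf
  set S : ℝ := ∑ j, ‖g j‖ with hS
  clear_value n f S
  have hn1 : (1:ℝ) ≤ n := by rw [hn]; have : (0:ℝ) ≤ (k:ℝ) := Nat.cast_nonneg k; linarith
  have hn0 : (0:ℝ) < n := lt_of_lt_of_le one_pos hn1
  have hS0 : 0 ≤ S := by rw [hS]; exact Finset.sum_nonneg fun i _ => norm_nonneg _
  -- pointwise bound
  have hpt : ∀ i j : Fin (k+1), -(ε * ‖g i‖ * ‖g j‖) ≤ ⟪g i, g j⟫ := by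
    intro i j
    by_cases hij : i = j
    · subst hij
      have h1 : (0:ℝ) ≤ ⟪g i, g i⟫ := real_inner_self_nonneg
      nlinarith [norm_nonneg (g i),
        mul_nonneg (mul_nonneg hε0 (norm_nonneg (g i))) (norm_nonneg (g i))]
    · exact neg_le_of_abs_le (horth i j hij)
  -- Cauchy-Schwarz on the sum of norms
  have hCS : S ^ 2 ≤ n * ∑ j, ‖g j‖ ^ 2 := by
    have h := sq_sum_le_card_mul_sum_sq (s := (Finset.univ : Finset (Fin (k+1))))
      (f := fun j => ‖g j‖)
    rw [hS, hn]
    simpa using h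
  -- expand the norm of f
  have hnorm : ‖f‖ ^ 2 = ∑ i, ∑ j, ⟪g i, g j⟫ := by
    rw [← real_inner_self_eq_norm_sq, hf, sum_inner]
    exact Finset.sum_congr rfl fun i _ => inner_sum _ _ _
  have hSsq : ∑ i, ∑ j, (‖g i‖ * ‖g j‖) = S ^ 2 := by
    rw [hS, sq, Finset.sum_mul_sum]
  -- lower bound on ‖f‖²
  have hlow : (∑ j, ‖g j‖ ^ 2) - ε * S ^ 2 ≤ ‖f‖ ^ 2 := by
    rw [hnorm, ← hSsq]
    have e1 : ∑ i, ∑ j, ((if i = j then ‖g i‖ ^ 2 else 0) - ε * (‖g i‖ * ‖g j‖))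
        = (∑ j, ‖g j‖ ^ 2) - ε * ∑ i, ∑ j, (‖g i‖ * ‖g j‖) := by
      simp only [Finset.sum_sub_distrib]
      congr 1
      · simp
      · rw [Finset.mul_sum]
        exact Finset.sum_congr rfl fun i _ => by rw [Finset.mul_sum]
    rw [← e1]
    refine Finset.sum_le_sum fun i _ => Finset.sum_le_sum fun j _ => ?_
    by_cases hij : i = j
    · subst hij
      rw [if_pos rfl, real_inner_self_eq_norm_sq]
      nlinarith [mul_nonneg (mul_nonneg hε0 (norm_nonneg (g i))) (norm_nonneg (g i))]
    · rw [if_neg hij]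
      have := hpt i j
      linarith
  have hnε : n * ε ≤ 1 / 2 := by
    nlinarith [mul_nonneg hε0 (mul_nonneg hn0.le (sub_nonneg.mpr hn1))]
  have hkey : S ^ 2 ≤ 4 * n * ‖f‖ ^ 2 := by
    have hA := mul_le_mul_of_nonneg_left hlow hn0.le
    have hB := mul_le_mul_of_nonneg_right hnε (sq_nonneg S)
    nlinarith [hCS, mul_nonneg hn0.le (sq_nonneg ‖f‖)]
  have hnormf0 : 0 ≤ ‖f‖ := norm_nonneg f
  have hsq : (2 * Real.sqrt n * ‖f‖) ^ 2 = 4 * n * ‖f‖ ^ 2 := by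
    rw [mul_pow, mul_pow, Real.sq_sqrt hn0.le]; ring
  have hmain : S ≤ 2 * Real.sqrt n * ‖f‖ := by
    have h2 : S ^ 2 ≤ (2 * Real.sqrt n * ‖f‖) ^ 2 := by rw [hsq]; exact hkey
    exact (pow_le_pow_iff_left₀ hS0 (by positivity) two_ne_zero).mp h2
  refine ⟨hmain, fun I => ?_⟩
  -- second part
  have hfj : ∀ j, -(ε * S * ‖g j‖) ≤ ⟪f, g j⟫ := by
    intro j
    rw [hf, sum_inner]
    have h1 : ∑ i, -(ε * ‖g i‖ * ‖g j‖) ≤ ∑ i, ⟪g i, g j⟫ :=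
      Finset.sum_le_sum fun i _ => hpt i j
    have h2 : ε * S * ‖g j‖ = ∑ i, ε * ‖g i‖ * ‖g j‖ := by
      rw [hS, Finset.mul_sum, Finset.sum_mul]
    rw [h2, ← Finset.sum_neg_distrib]
    exact h1
  have hIS : ∑ j ∈ I, ‖g j‖ ≤ S := by
    rw [hS]
    exact Finset.sum_le_sum_of_subset_of_nonneg (Finset.subset_univ I)
      (fun i _ _ => norm_nonneg _)
  have h1 : -∑ j ∈ I, ⟪f, g j⟫ ≤ ε * S * S := by
    rw [← Finset.sum_neg_distrib]
    calc ∑ j ∈ I, -⟪f, g j⟫ ≤ ∑ j ∈ I, ε * S * ‖g j‖ :=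
          Finset.sum_le_sum fun j _ => by
            have := hfj j; linarith
      _ = ε * S * ∑ j ∈ I, ‖g j‖ := (Finset.mul_sum _ _ _).symm
      _ ≤ ε * S * S := mul_le_mul_of_nonneg_left hIS (by positivity)
  calc -∑ j ∈ I, ⟪f, g j⟫ ≤ ε * S ^ 2 := by rw [sq]; linarith
    _ ≤ ε * (4 * n * ‖f‖ ^ 2) := mul_le_mul_of_nonneg_left hkey hε0
    _ ≤ 4 * n ^ 2 * ε * ‖f‖ ^ 2 := by
        nlinarith [mul_nonneg (mul_nonneg hε0 (sq_nonneg ‖f‖))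
          (mul_nonneg hn0.le (sub_nonneg.mpr hn1))]
end
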